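/- Let R be a ring and a, b, c ∈ R with aba = aca. If 1 + ac has a Hirano inverse, then 1 + ba has a Hirano inverse. -/

import Mathlib

/-!
An element `x` has a Hirano inverse iff `x - x ^ 3` is nilpotent; both directions can be checked
in the commutative subring generated by `x` and, for the forward one, its Hirano inverse. There
`x ^ 2 - x ^ 4 = x * (x - x ^ 3)`, so `x ^ 2` is idempotent modulo the nilradical and lifts to an
idempotent `e`. Inverting `x ^ 2` in the corner `e R e` and multiplying by `x` gives the Hirano
inverse.

Since `(1 + z) - (1 + z) ^ 3 = -z (1 + z) (2 + z)`, what is left is to carry the nilpotency of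
`t q(t)` for `t = a c` over to `w q(w)` for `w = b a`. Here `aba = aca` says `a w = t a`, and hence
`(w q(w)) ^ (n + 1) = b (t q(t)) ^ n q(t) a`.
-/

def IsHiranoInverse {R : Type*} [Ring R] (a b : R) : Prop :=
  IsNilpotent (a ^ 2 - a * b) ∧ a * b = b * a ∧ b = b * a * b

theorem exists_isIdempotentElem_isNilpotent_sub {S : Type*} [CommRing S] {u : S}
    (h : IsNilpotent (u - u ^ 2)) : ∃ e, IsIdempotentElem e ∧ IsNilpotent (u - e) := by
  let f := Ideal.Quotient.mk (nilradical S)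
  have hker : ∀ z ∈ RingHom.ker f, IsNilpotent z := by
    simp [f, Ideal.mk_ker, mem_nilradical]
  have hu : IsIdempotentElem (f u) := by
    rw [IsIdempotentElem, ← map_mul, Ideal.Quotient.eq, mem_nilradical, ← isNilpotent_neg_iff]
    simpa [pow_two] using h
  obtain ⟨e, he, hfe⟩ :=
    exists_isIdempotentElem_eq_of_ker_isNilpotent f hker (f u) ⟨u, rfl⟩ hu
  exact ⟨e, he, mem_nilradical.1 (Ideal.Quotient.eq.1 hfe.symm)⟩

namespace CommRing

variable {S : Type*} [CommRing S] {x y : S}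

theorem isNilpotent_sub_pow_three_of_isHiranoInverse (h : IsHiranoInverse x y) :
    IsNilpotent (x - x ^ 3) := by
  obtain ⟨hn, -, hy⟩ := h
  have hsq : (x - x ^ 2 * y) ^ 2 = (x ^ 2 - x * y) * (1 - x * y) := by
    linear_combination (x - x ^ 3) * hy
  have hd : IsNilpotent (x - x ^ 2 * y) :=
    IsNilpotent.of_pow (hsq ▸ (Commute.all _ _).isNilpotent_mul_right hn)
  rw [show x - x ^ 3 = (x - x ^ 2 * y) - x * (x ^ 2 - x * y) by ring]
  exact (Commute.all _ _).isNilpotent_sub hd ((Commute.all _ _).isNilpotent_mul_left hn)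

theorem exists_isHiranoInverse_of_isNilpotent (h : IsNilpotent (x - x ^ 3)) :
    ∃ y, IsHiranoInverse x y := by
  obtain ⟨e, he, hxe⟩ := exists_isIdempotentElem_isNilpotent_sub (u := x ^ 2) <| by
    rw [show x ^ 2 - (x ^ 2) ^ 2 = x * (x - x ^ 3) by ring]
    exact (Commute.all _ _).isNilpotent_mul_left h
  have hunit : IsUnit (1 + (x ^ 2 - e) * e) :=
    ((Commute.all _ _).isNilpotent_mul_right hxe).isUnit_one_add
  obtain ⟨w, hw⟩ := hunit.exists_left_inv
  have hwe : x ^ 2 * (w * e) = e := by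
    linear_combination e * hw - (w * x ^ 2 - w * (e + 1)) * he.eq
  refine ⟨x * (w * e), ?_, mul_comm _ _, ?_⟩
  · rwa [← mul_assoc, ← pow_two, hwe]
  · linear_combination -(x * w * e) * hwe - x * w * he.eq

end CommRing

section Ring

variable {R : Type*} [Ring R]

open scoped IsMulCommutative

theorem isHiranoInverse_map_iff {S : Type*} [Ring S] {f : R →+* S} (hf : Function.Injective f)
    {x y : R} : IsHiranoInverse (f x) (f y) ↔ IsHiranoInverse x y := by
  simp only [IsHiranoInverse, ← map_pow, ← map_mul, ← map_sub, IsNilpotent.map_iff hf,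
    hf.eq_iff]

theorem IsHiranoInverse.isNilpotent_sub_pow_three {x y : R} (h : IsHiranoInverse x y) :
    IsNilpotent (x - x ^ 3) := by
  let T := Subring.closure {x, y}
  have : IsMulCommutative T := Subring.isMulCommutative_closure <| by
    rintro a (rfl | rfl) b (rfl | rfl) <;> simp [h.2.1]
  let X : T := ⟨x, Subring.subset_closure (by simp)⟩
  let Y : T := ⟨y, Subring.subset_closure (by simp)⟩
  have hXY : IsHiranoInverse X Y :=
    (isHiranoInverse_map_iff (f := T.subtype) Subtype.val_injective).1 h
  exact (CommRing.isNilpotent_sub_pow_three_of_isHiranoInverse hXY).map T.subtype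

theorem exists_isHiranoInverse_of_isNilpotent {x : R} (h : IsNilpotent (x - x ^ 3)) :
    ∃ y, IsHiranoInverse x y := by
  let T := Subring.closure {x}
  have : IsMulCommutative T := Subring.isMulCommutative_closure <| by
    rintro a rfl b rfl; rfl
  let X : T := ⟨x, Subring.subset_closure rfl⟩
  obtain ⟨Y, hY⟩ := CommRing.exists_isHiranoInverse_of_isNilpotent (x := X)
    ((IsNilpotent.map_iff (f := T.subtype) Subtype.val_injective).1 h)
  exact ⟨Y, (isHiranoInverse_map_iff (f := T.subtype) Subtype.val_injective).2 hY⟩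

theorem exists_isHiranoInverse_iff {x : R} :
    (∃ y, IsHiranoInverse x y) ↔ IsNilpotent (x - x ^ 3) :=
  ⟨fun ⟨_, h⟩ ↦ h.isNilpotent_sub_pow_three, exists_isHiranoInverse_of_isNilpotent⟩

theorem SemiconjBy.one_add_mul_two_add {a x y : R} (h : SemiconjBy a x y) :
    SemiconjBy a ((1 + x) * (2 + x)) ((1 + y) * (2 + y)) :=
  ((SemiconjBy.one_right a).add_right h).mul_right
    (SemiconjBy.add_right (Commute.ofNat_right a 2) h)

theorem one_add_sub_one_add_pow_three (z : R) :
    (1 + z) - (1 + z) ^ 3 = -(z * ((1 + z) * (2 + z))) := by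
  noncomm_ring

end Ring

theorem IsNilpotent.mul_mul_of_semiconjBy {M : Type*} [MonoidWithZero M] {a b t u v : M}
    (ht : SemiconjBy a (b * a) t) (huv : SemiconjBy a u v) (hu : Commute (b * a) u)
    (hv : Commute t v) (h : IsNilpotent (t * v)) : IsNilpotent (b * a * u) := by
  obtain ⟨n, hn⟩ := h
  refine ⟨n + 1, ?_⟩
  calc (b * a * u) ^ (n + 1) = b * (a * (b * a) ^ n) * u ^ (n + 1) := by
        rw [hu.mul_pow, pow_succ', mul_assoc b a, mul_assoc b]
    _ = b * (t ^ n * (a * u ^ (n + 1))) := by rw [(ht.pow_right n).eq]; simp only [mul_assoc]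
    _ = b * ((t * v) ^ n * v * a) := by
        rw [(huv.pow_right (n + 1)).eq, hv.mul_pow, _root_.pow_succ]; simp only [mul_assoc]
    _ = 0 := by rw [hn, zero_mul, zero_mul, mul_zero]

theorem stmt17 {R : Type*} [Ring R] (a b c : R) (h : a * b * a = a * c * a)
    (hac : ∃ y, IsHiranoInverse (1 + a * c) y) :
    ∃ y, IsHiranoInverse (1 + b * a) y := by
  have ht : SemiconjBy a (b * a) (a * c) := by rw [SemiconjBy, ← mul_assoc, h]
  rw [exists_isHiranoInverse_iff, one_add_sub_one_add_pow_three, isNilpotent_neg_iff] at hac ⊢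
  exact hac.mul_mul_of_semiconjBy ht ht.one_add_mul_two_add
    (Commute.refl _).one_add_mul_two_add (Commute.refl _).one_add_mul_two_add
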